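/- arXiv:1409.7111 — 2 statements merged into one kernel-verified Lean document; each statement's English description precedes it below -/
import Mathlib

section
/- Let Σ be a finite root system with Weyl group W acting on the formal group algebra S = R[[Λ]]_F of the weight lattice, assume each x_α (α a root) is regular in S, and let Q = S[1/x_α : α ∈ Σ]. For a simple root α define the formal Demazure element X_α = (1/x_α) − (1/x_α) δ_{s_α} and the push-pull element Y_α = (1/x_{−α}) + (1/x_α) δ_{s_α} in Q_W. Then X_α + Y_α = κ_α · δ_e where κ_α = 1/x_α + 1/x_{−α}, and moreover κ_α lies in S (not merely in Q). -/
/-!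
STATEMENT 6: Let Σ be a root system with Weyl group W acting on the formal group
algebra S = R[[Λ]]_F, assume each x_β (β ∈ Σ) is regular in S, and let
Q = S[1/x_β : β ∈ Σ].  For a simple root α, the formal Demazure element
X_α = (1/x_α) − (1/x_α) δ_{s_α} and the push-pull element
Y_α = (1/x_{−α}) + (1/x_α) δ_{s_α} of Q_W satisfy X_α + Y_α = κ_α · δ_e with
κ_α = 1/x_α + 1/x_{−α}, and moreover κ_α lies in S (not merely in Q).
The formal group algebra is encoded by a map x : Λ → S with x_0 = 0 and
x_{λ+μ} = F(x_λ, x_μ), where the formal addition is F(a,b) = a + b − a·b·g(a,b).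
-/

noncomputable section
open scoped Classical

def tdelta {Q : Type*} [CommRing Q] {W : Type*} [Group W] (w : W) (q : Q) : W → Q :=
  fun v => if v = w then q else 0

theorem demazure_plus_push_pull_and_kappa_integrality
    {S M Q W : Type*} [CommRing S] [AddCommGroup M] [CommRing Q] [Algebra S Q]
    [Group W]
    -- the formal group algebra structure on S
    (x : M → S) (fadd g : S → S → S)
    (hfadd : ∀ a b : S, fadd a b = a + b - a * b * g a b)
    (hx0 : x 0 = 0)
    (hxadd : ∀ l m : M, x (l + m) = fadd (x l) (x m))
    -- the roots, regularity, and the localization Q of S at all x_β, β ∈ Σ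
    (Sig : Set M) (hneg : ∀ β ∈ Sig, -β ∈ Sig)
    (hreg : ∀ β ∈ Sig, IsRegular (x β))
    [IsLocalization (Submonoid.closure (x '' Sig)) Q]
    -- a (simple) root α and the corresponding reflection s_α ∈ W
    (α : M) (hα : α ∈ Sig) (sα : W) :
    -- X_α + Y_α = κ_α δ_e
    ((tdelta (1 : W) (Ring.inverse (algebraMap S Q (x α)))
        - tdelta sα (Ring.inverse (algebraMap S Q (x α))))
      + (tdelta (1 : W) (Ring.inverse (algebraMap S Q (x (-α))))
        + tdelta sα (Ring.inverse (algebraMap S Q (x α))))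
      = tdelta (1 : W)
          (Ring.inverse (algebraMap S Q (x α)) + Ring.inverse (algebraMap S Q (x (-α))))) ∧
    -- κ_α ∈ S
    (∃ k : S, algebraMap S Q k =
        Ring.inverse (algebraMap S Q (x α)) + Ring.inverse (algebraMap S Q (x (-α)))) := by
  constructor
  · funext v
    simp only [tdelta, Pi.add_apply, Pi.sub_apply]
    split_ifs <;> ring
  · refine ⟨g (x α) (x (-α)), ?_⟩
    have ha : IsUnit (algebraMap S Q (x α)) :=
      IsLocalization.map_units Q (⟨x α, Submonoid.subset_closure ⟨α, hα, rfl⟩⟩ :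
        Submonoid.closure (x '' Sig))
    have hb : IsUnit (algebraMap S Q (x (-α))) :=
      IsLocalization.map_units Q (⟨x (-α), Submonoid.subset_closure ⟨-α, hneg α hα, rfl⟩⟩ :
        Submonoid.closure (x '' Sig))
    have key : x α + x (-α) = g (x α) (x (-α)) * (x α * x (-α)) := by
      have h0 : (0 : S) = fadd (x α) (x (-α)) := by
        rw [← hxadd, add_neg_cancel, hx0]
      rw [hfadd] at h0
      linear_combination -h0
    set a := algebraMap S Q (x α)
    set b := algebraMap S Q (x (-α))
    have hab : IsUnit (a * b) := ha.mul hb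
    apply hab.mul_left_cancel
    have h1 : a * Ring.inverse a = 1 := Ring.mul_inverse_cancel a ha
    have h2 : b * Ring.inverse b = 1 := Ring.mul_inverse_cancel b hb
    have hmap : algebraMap S Q (x α + x (-α))
        = algebraMap S Q (g (x α) (x (-α))) * (a * b) := by
      rw [key, map_mul, map_mul]
    rw [map_add] at hmap
    calc a * b * algebraMap S Q (g (x α) (x (-α)))
        = a + b := by rw [mul_comm, ← hmap]
      _ = a * b * (Ring.inverse a + Ring.inverse b) := by
          rw [mul_add]
          linear_combination -b * h1 - a * h2

end
end

section
/- With notation as in the formal Demazure calculus, δ_{s_α} = δ_e − x_α X_α in Q_W; consequently the S-subalgebra D_F of Q_W generated by S and the elements X_α (α a root) contains the twisted group algebra S_W. -/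
/-!
STATEMENT 8: In the formal Demazure calculus, δ_{s_α} = δ_e − x_α X_α in Q_W;
consequently the S-subalgebra D_F of Q_W generated by (the image of) S and the
formal Demazure elements X_α contains the twisted group algebra S_W, i.e. all
elements q δ_w with q ∈ S, w ∈ W.
Setting: S = R[[Λ]]_F with W its Weyl group, generated by the reflections s_α;
Q the localization of S at all x_α (so each x_α becomes a unit); Q_W is modelled
as `W → Q` with the twisted multiplication.  D_F is realized as the additive
closure of the set of products of the generators (scalars q δ_e, q ∈ S, and the
elements X_α), which is exactly the subring they generate.
-/

noncomputable section
open scoped Classical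

def twMul {Q : Type*} [CommRing Q] {W : Type*} [Group W] [Fintype W]
    (φ : W →* RingAut Q) (f g : W → Q) : W → Q :=
  fun w => ∑ u : W, f u * φ u (g (u⁻¹ * w))

/-- The formal Demazure element `X_α = (1/x_α) δ_e − (1/x_α) δ_{s_α}`. -/
def Xdem {S Q : Type*} [CommRing S] [CommRing Q] [Algebra S Q] {W : Type*} [Group W]
    (xα : S) (sα : W) : W → Q :=
  tdelta (1 : W) (Ring.inverse (algebraMap S Q xα))
    - tdelta sα (Ring.inverse (algebraMap S Q xα))

/-- `D_F`: the subring of `Q_W` generated by the scalars `q δ_e` (q ∈ S) and the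
Demazure elements, realized as the additive subgroup generated by all finite
(twisted) products of these generators. -/
def DF {S Q : Type*} [CommRing S] [CommRing Q] [Algebra S Q] {W A : Type*}
    [Group W] [Fintype W] (φ : W →* RingAut Q) (xs : A → S) (sA : A → W) :
    AddSubgroup (W → Q) :=
  AddSubgroup.closure
    {z : W → Q | ∃ l : List (W → Q),
      (∀ y ∈ l, (∃ q : S, y = tdelta (1 : W) (algebraMap S Q q)) ∨
        (∃ i : A, y = Xdem (xs i) (sA i))) ∧
      z = l.foldr (twMul φ) (tdelta (1 : W) (1 : Q))}

/-!
The identity δ_{s_α} = δ_e − x_α X_α is a direct computation once x_α is invertible.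
Since D_F is closed under the twisted product, the w with δ_w ∈ D_F form a submonoid of W
containing every s_α; in a finite group the submonoid generated by a set equals the subgroup it
generates, so this is all of W, and then q δ_w = (q δ_e) δ_w ∈ D_F.
-/

section TwistedGroupAlgebra

variable {Q : Type*} [CommRing Q] {W : Type*} [Group W] [Fintype W] (φ : W →* RingAut Q)

theorem twMul_tdelta_tdelta (w v : W) (q p : Q) :
    twMul φ (tdelta w q) (tdelta v p) = tdelta (w * v) (q * φ w p) := by
  funext x
  simp only [twMul, tdelta, ite_mul, zero_mul, Finset.sum_ite_eq', Finset.mem_univ, if_true,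
    inv_mul_eq_iff_eq_mul]
  split_ifs <;> simp

theorem tdelta_mul_one (w v : W) :
    tdelta (w * v) (1 : Q) = twMul φ (tdelta w 1) (tdelta v 1) := by
  simp [twMul_tdelta_tdelta]

theorem tdelta_eq_twMul_tdelta_one (w : W) (q : Q) :
    tdelta w q = twMul φ (tdelta 1 q) (tdelta w 1) := by
  simp [twMul_tdelta_tdelta]

theorem one_twMul (g : W → Q) : twMul φ (tdelta 1 1) g = g := by
  funext x
  simp [twMul, tdelta]

theorem twMul_one (f : W → Q) : twMul φ f (tdelta 1 1) = f := by
  funext x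
  simp [twMul, tdelta, inv_mul_eq_one, eq_comm]

theorem twMul_assoc (f g h : W → Q) :
    twMul φ (twMul φ f g) h = twMul φ f (twMul φ g h) := by
  funext w
  simp only [twMul, Finset.sum_mul, map_sum, Finset.mul_sum, map_mul]
  rw [Finset.sum_comm]
  refine Finset.sum_congr rfl fun v _ => ?_
  refine Fintype.sum_equiv (Equiv.mulLeft v⁻¹) _ _ fun u => ?_
  have hinv : (v⁻¹ * u)⁻¹ * (v⁻¹ * w) = u⁻¹ * w := by group
  simp only [Equiv.coe_mulLeft]
  rw [hinv, ← RingAut.mul_apply, ← map_mul, mul_inv_cancel_left, mul_assoc]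

theorem twMul_add_left (f g h : W → Q) :
    twMul φ (f + g) h = twMul φ f h + twMul φ g h := by
  funext w
  simp [twMul, add_mul, Finset.sum_add_distrib]

theorem twMul_add_right (f g h : W → Q) :
    twMul φ f (g + h) = twMul φ f g + twMul φ f h := by
  funext w
  simp [twMul, mul_add, Finset.sum_add_distrib]

theorem twMul_neg_left (f g : W → Q) : twMul φ (-f) g = -twMul φ f g := by
  funext w
  simp [twMul]

theorem twMul_neg_right (f g : W → Q) : twMul φ f (-g) = -twMul φ f g := by
  funext w
  simp [twMul]

theorem twMul_zero_left (g : W → Q) : twMul φ 0 g = 0 := by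
  funext w
  simp [twMul]

theorem twMul_zero_right (f : W → Q) : twMul φ f 0 = 0 := by
  funext w
  simp [twMul]

theorem twMul_sub_right (f g h : W → Q) :
    twMul φ f (g - h) = twMul φ f g - twMul φ f h := by
  rw [sub_eq_add_neg, twMul_add_right, twMul_neg_right, sub_eq_add_neg]

theorem foldr_twMul_append (l₁ l₂ : List (W → Q)) :
    (l₁ ++ l₂).foldr (twMul φ) (tdelta 1 1) =
      twMul φ (l₁.foldr (twMul φ) (tdelta 1 1)) (l₂.foldr (twMul φ) (tdelta 1 1)) := by
  induction l₁ with
  | nil => exact (one_twMul φ _).symm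
  | cons a l ih => rw [List.cons_append, List.foldr_cons, List.foldr_cons, ih, twMul_assoc]

theorem tdelta_eq_one_sub_twMul_Xdem {S : Type*} [CommRing S] [Algebra S Q] {x : S}
    (hx : IsUnit (algebraMap S Q x)) (s : W) :
    tdelta s (1 : Q) = tdelta 1 1 - twMul φ (tdelta 1 (algebraMap S Q x)) (Xdem x s) := by
  rw [Xdem, twMul_sub_right, twMul_tdelta_tdelta, twMul_tdelta_tdelta, map_one, one_mul, one_mul,
    RingAut.one_apply, Ring.mul_inverse_cancel _ hx]
  abel

end TwistedGroupAlgebra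

section DemazureSubring

variable {S Q : Type*} [CommRing S] [CommRing Q] [Algebra S Q] {W A : Type*}
  [Group W] [Fintype W] (φ : W →* RingAut Q) (xs : A → S) (sA : A → W)

theorem twMul_mem_DF {a b : W → Q} (ha : a ∈ DF φ xs sA) (hb : b ∈ DF φ xs sA) :
    twMul φ a b ∈ DF φ xs sA := by
  induction ha, hb using AddSubgroup.closure_induction₂ with
  | mem x y hx hy =>
    obtain ⟨l₁, hl₁, rfl⟩ := hx
    obtain ⟨l₂, hl₂, rfl⟩ := hy
    refine AddSubgroup.subset_closure ⟨l₁ ++ l₂, fun y hy => ?_, (foldr_twMul_append φ l₁ l₂).symm⟩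
    exact (List.mem_append.1 hy).elim (hl₁ y) (hl₂ y)
  | zero_left => rw [twMul_zero_left]; exact zero_mem _
  | zero_right => rw [twMul_zero_right]; exact zero_mem _
  | add_left _ _ _ _ _ _ h₁ h₂ => rw [twMul_add_left]; exact add_mem h₁ h₂
  | add_right _ _ _ _ _ _ h₁ h₂ => rw [twMul_add_right]; exact add_mem h₁ h₂
  | neg_left _ _ _ _ h => rw [twMul_neg_left]; exact neg_mem h
  | neg_right _ _ _ _ h => rw [twMul_neg_right]; exact neg_mem h

theorem one_mem_DF : tdelta 1 (1 : Q) ∈ DF φ xs sA :=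
  AddSubgroup.subset_closure ⟨[], by simp, rfl⟩

theorem mem_DF_of_generator {y : W → Q}
    (hy : (∃ q : S, y = tdelta 1 (algebraMap S Q q)) ∨ ∃ i : A, y = Xdem (xs i) (sA i)) :
    y ∈ DF φ xs sA :=
  AddSubgroup.subset_closure ⟨[y], by simpa using hy, (twMul_one φ y).symm⟩

def deltaSubmonoid : Submonoid W where
  carrier := {w | tdelta w (1 : Q) ∈ DF φ xs sA}
  one_mem' := one_mem_DF φ xs sA
  mul_mem' {a b} ha hb := by
    change tdelta (a * b) (1 : Q) ∈ DF φ xs sA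
    rw [tdelta_mul_one φ]
    exact twMul_mem_DF φ xs sA ha hb

theorem tdelta_mem_DF_of_closure_eq_top
    (hs : ∀ i : A, tdelta (sA i) (1 : Q) ∈ DF φ xs sA)
    (hgen : Subgroup.closure (Set.range sA) = ⊤) (w : W) :
    tdelta w (1 : Q) ∈ DF φ xs sA := by
  have hle : Submonoid.closure (Set.range sA) ≤ deltaSubmonoid φ xs sA :=
    Submonoid.closure_le.2 (Set.range_subset_iff.2 hs)
  rw [← Subgroup.closure_toSubmonoid_of_finite, hgen] at hle
  exact hle (Subgroup.mem_top w)

end DemazureSubring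

theorem delta_s_eq_and_SW_subset_DF
    {S Q : Type*} [CommRing S] [CommRing Q] [Algebra S Q] {W A : Type*}
    [Group W] [Fintype W]
    (φ : W →* RingAut Q)
    (xs : A → S) (sA : A → W)
    -- each x_α is invertible in the localization Q
    (hunit : ∀ i : A, IsUnit (algebraMap S Q (xs i)))
    -- W is generated by the reflections s_α
    (hgen : Subgroup.closure (Set.range sA) = ⊤) :
    -- δ_{s_α} = δ_e − x_α X_α
    (∀ i : A, tdelta (sA i) (1 : Q) =
        tdelta (1 : W) (1 : Q)
          - twMul φ (tdelta (1 : W) (algebraMap S Q (xs i))) (Xdem (xs i) (sA i))) ∧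
    -- S_W ⊆ D_F
    (∀ (w : W) (q : S), tdelta w (algebraMap S Q q) ∈ DF φ xs sA) := by
  have hdelta_s i := tdelta_eq_one_sub_twMul_Xdem φ (hunit i) (sA i)
  refine ⟨hdelta_s, fun w q => ?_⟩
  have hscalar (q : S) : tdelta 1 (algebraMap S Q q) ∈ DF φ xs sA :=
    mem_DF_of_generator φ xs sA (.inl ⟨q, rfl⟩)
  have hs (i : A) : tdelta (sA i) (1 : Q) ∈ DF φ xs sA := by
    rw [hdelta_s i]
    exact sub_mem (one_mem_DF φ xs sA)
      (twMul_mem_DF φ xs sA (hscalar (xs i)) (mem_DF_of_generator φ xs sA (.inr ⟨i, rfl⟩)))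
  rw [tdelta_eq_twMul_tdelta_one φ]
  exact twMul_mem_DF φ xs sA (hscalar q) (tdelta_mem_DF_of_closure_eq_top φ xs sA hs hgen w)

end
end
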